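/- arXiv:1511.09055 — 6 statements merged into one kernel-verified Lean document; each statement's English description precedes it below -/
import Mathlib

section
/- If T is a contraction on a Hilbert space H and Re(T^2) ≥ I, then T^2 = I. -/
open ContinuousLinearMap

/-- The modulus `|T| = (T*T)^{1/2}` of an operator. -/
noncomputable def absOp {H : Type*} [NormedAddCommGroup H] [InnerProductSpace ℂ H]
    [CompleteSpace H] (T : H →L[ℂ] H) : H →L[ℂ] H :=
  CFC.sqrt (adjoint T * T)

/-- The real part `Re T = (T + T*)/2` of an operator. -/
noncomputable def reOp {H : Type*} [NormedAddCommGroup H] [InnerProductSpace ℂ H]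
    [CompleteSpace H] (T : H →L[ℂ] H) : H →L[ℂ] H :=
  (2 : ℂ)⁻¹ • (T + adjoint T)

/-- `|Re T| = ((Re T)^2)^{1/2}`. -/
noncomputable def absRe {H : Type*} [NormedAddCommGroup H] [InnerProductSpace ℂ H]
    [CompleteSpace H] (T : H →L[ℂ] H) : H →L[ℂ] H :=
  CFC.sqrt (reOp T ^ 2)

/-!
With `S = T²` we have `‖S‖ ≤ 1` and `‖x‖² ≤ Re ⟪S x, x⟫`, hence
`‖S x - x‖² = ‖S x‖² - 2 Re ⟪S x, x⟫ + ‖x‖² ≤ 0`.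
-/

open scoped InnerProductSpace

theorem eq_of_norm_le_of_norm_sq_le_re_inner {𝕜 E : Type*} [RCLike 𝕜] [NormedAddCommGroup E]
    [InnerProductSpace 𝕜 E] {x y : E} (hy : ‖y‖ ≤ ‖x‖) (hxy : ‖x‖ ^ 2 ≤ RCLike.re ⟪y, x⟫_𝕜) :
    y = x := by
  have hsq : ‖y - x‖ ^ 2 ≤ 0 := by
    rw [@norm_sub_sq 𝕜]
    nlinarith [norm_nonneg y]
  exact sub_eq_zero.mp (norm_eq_zero.mp (by nlinarith [norm_nonneg (y - x)]))

theorem re_inner_reOp_apply_self {H : Type*} [NormedAddCommGroup H] [InnerProductSpace ℂ H]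
    [CompleteSpace H] (S : H →L[ℂ] H) (x : H) :
    RCLike.re ⟪reOp S x, x⟫_ℂ = RCLike.re ⟪S x, x⟫_ℂ := by
  have hadj : RCLike.re ⟪adjoint S x, x⟫_ℂ = RCLike.re ⟪S x, x⟫_ℂ := by
    rw [adjoint_inner_left, inner_re_symm]
  simp only [reOp, smul_apply, add_apply, inner_smul_left, inner_add_left, map_inv₀,
    Complex.conj_ofNat, RCLike.re_to_complex] at hadj ⊢
  rw [Complex.mul_re, Complex.add_re, Complex.add_im, hadj]
  norm_num
  ring

theorem eq_one_of_norm_le_one_of_one_le_reOp {H : Type*} [NormedAddCommGroup H]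
    [InnerProductSpace ℂ H] [CompleteSpace H] {S : H →L[ℂ] H} (hS : ‖S‖ ≤ 1)
    (h : 1 ≤ reOp S) : S = 1 := by
  ext x
  rw [one_apply_eq_self]
  refine eq_of_norm_le_of_norm_sq_le_re_inner (𝕜 := ℂ) (by simpa using le_of_opNorm_le S hS x) ?_
  have hpos := ((le_def _ _).mp h).re_inner_nonneg_left x
  rw [sub_apply, inner_sub_left, map_sub, re_inner_reOp_apply_self, one_apply_eq_self,
    inner_self_eq_norm_sq] at hpos
  linarith

/-- If `T` is a contraction and `Re (T²) ≥ I`, then `T² = I`. -/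
theorem stmt1 {H : Type*} [NormedAddCommGroup H] [InnerProductSpace ℂ H] [CompleteSpace H]
    (T : H →L[ℂ] H) (hT : ‖T‖ ≤ 1) (h : (1 : H →L[ℂ] H) ≤ reOp (T ^ 2)) :
    T ^ 2 = 1 :=
  eq_one_of_norm_le_one_of_one_le_reOp
    ((norm_pow_le' T two_pos).trans (pow_le_one₀ (norm_nonneg T) hT)) h
end

section
/- Let T be a contraction on H with block matrix form T = [[W, R],[0, Q]] with respect to an orthogonal decomposition H = M ⊕ M^⊥, where T restricted to M (i.e., W on M) is a partial isometry. Then W*R = 0, i.e., the range of R is contained in the kernel of W*. -/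
/-! Writing `x ∈ Mᗮ` and `y ∈ M`, the `M`-component of `T (y + x)` is `W y + R x`, so
`‖W y + R x‖² ≤ ‖y‖² + ‖x‖²`. A partial isometry is isometric on the range of `W*`; taking
`y = t • W* R x` and expanding, `2 t ‖W* R x‖² ≤ ‖x‖²` for every `t > 0`, hence `W* R x = 0`. -/

open ContinuousLinearMap

open scoped InnerProductSpace

section PartialIsometry

variable {𝕜 E F : Type*} [RCLike 𝕜] [NormedAddCommGroup E] [InnerProductSpace 𝕜 E]
  [CompleteSpace E] [NormedAddCommGroup F] [InnerProductSpace 𝕜 F] [CompleteSpace F]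
  {W : E →L[𝕜] F}

theorem comp_adjoint_comp_self_of_isIdempotentElem (hW : IsIdempotentElem (adjoint W ∘L W)) :
    W ∘L (adjoint W ∘L W) = W := by
  ext z
  have hker : (adjoint W ∘L W) z - z ∈ (adjoint W ∘L W).ker := by
    rw [LinearMap.mem_ker, coe_coe, map_sub, sub_eq_zero]
    exact congr($(hW.eq) z)
  rw [ker_adjoint_comp_self, LinearMap.mem_ker, coe_coe, map_sub, sub_eq_zero] at hker
  exact hker

theorem adjoint_comp_self_comp_adjoint_of_isIdempotentElem
    (hW : IsIdempotentElem (adjoint W ∘L W)) : (adjoint W ∘L W) ∘L adjoint W = adjoint W := by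
  simpa only [adjoint_comp, adjoint_adjoint] using
    congrArg adjoint (comp_adjoint_comp_self_of_isIdempotentElem hW)

theorem norm_apply_adjoint_apply_of_isIdempotentElem
    (hW : IsIdempotentElem (adjoint W ∘L W)) (y : F) : ‖W (adjoint W y)‖ = ‖adjoint W y‖ := by
  have hfix : (adjoint W ∘L W) (adjoint W y) = adjoint W y :=
    congr($(adjoint_comp_self_comp_adjoint_of_isIdempotentElem hW) y)
  rw [← sq_eq_sq₀ (norm_nonneg _) (norm_nonneg _), apply_norm_sq_eq_inner_adjoint_left, hfix,
    ← inner_self_eq_norm_sq (𝕜 := 𝕜)]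

end PartialIsometry

section

variable {𝕜 E : Type*} [RCLike 𝕜] [NormedAddCommGroup E] [InnerProductSpace 𝕜 E]

theorem Submodule.norm_le_of_mem_of_sub_mem_orthogonal {K : Submodule 𝕜 E} {v w : E}
    (hv : v ∈ K) (hw : w - v ∈ Kᗮ) : ‖v‖ ≤ ‖w‖ := by
  have h := norm_add_sq_eq_norm_sq_add_norm_sq_of_inner_eq_zero (𝕜 := 𝕜) v (w - v)
    (K.inner_right_of_mem_orthogonal hv hw)
  rw [add_sub_cancel] at h
  exact (pow_le_pow_iff_left₀ (norm_nonneg v) (norm_nonneg w) two_ne_zero).1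
    (by nlinarith [sq_nonneg ‖w - v‖])

theorem ContinuousLinearMap.norm_sq_le_add_of_sub_mem_orthogonal {T : E →L[𝕜] E} (hT : ‖T‖ ≤ 1)
    {K : Submodule 𝕜 E} {y x v : E}
    (hy : y ∈ K) (hx : x ∈ Kᗮ) (hv : v ∈ K) (h : T (y + x) - v ∈ Kᗮ) :
    ‖v‖ ^ 2 ≤ ‖y‖ ^ 2 + ‖x‖ ^ 2 := by
  have hpyth : ‖y + x‖ ^ 2 = ‖y‖ ^ 2 + ‖x‖ ^ 2 := by
    rw [sq, sq, sq, norm_add_sq_eq_norm_sq_add_norm_sq_of_inner_eq_zero (𝕜 := 𝕜) y x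
      (K.inner_right_of_mem_orthogonal hy hx)]
  rw [← hpyth]
  gcongr
  calc ‖v‖ ≤ ‖T (y + x)‖ := K.norm_le_of_mem_of_sub_mem_orthogonal hv h
    _ ≤ ‖y + x‖ := (T.le_of_opNorm_le hT _).trans_eq (one_mul _)

theorem re_inner_nonpos_of_forall_norm_sq_le {a b : E} {c : ℝ}
    (h : ∀ t : ℝ, 0 < t → ‖(t : 𝕜) • a + b‖ ^ 2 ≤ ‖(t : 𝕜) • a‖ ^ 2 + c) :
    RCLike.re ⟪a, b⟫_𝕜 ≤ 0 := by
  by_contra! hpos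
  set t := (|c| + 1) / (2 * RCLike.re ⟪a, b⟫_𝕜) with ht_def
  have ht : 0 < t := by positivity
  have := h t ht
  rw [norm_add_sq (𝕜 := 𝕜), inner_smul_real_left, RCLike.smul_re] at this
  have : 2 * (t * RCLike.re ⟪a, b⟫_𝕜) = |c| + 1 := by rw [ht_def]; field_simp
  nlinarith [le_abs_self c, sq_nonneg ‖b‖]

end

theorem stmt2_general {H : Type*} [NormedAddCommGroup H] [InnerProductSpace ℂ H]
    (T : H →L[ℂ] H) (hT : ‖T‖ ≤ 1) (M : Submodule ℂ H) [CompleteSpace M]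
    (W : M →L[ℂ] M) (hW : ∀ x : M, (W x : H) = T x)
    (hPI : IsIdempotentElem (adjoint W * W))
    (R : (Mᗮ : Submodule ℂ H) →L[ℂ] M) (hR : ∀ x : (Mᗮ : Submodule ℂ H), T x - R x ∈ Mᗮ) :
    (adjoint W).comp R = 0 := by
  refine ContinuousLinearMap.ext fun x => ?_
  set u := adjoint W (R x) with hu
  have hrow (y : M) : ‖W y + R x‖ ^ 2 ≤ ‖y‖ ^ 2 + ‖x‖ ^ 2 :=
    T.norm_sq_le_add_of_sub_mem_orthogonal hT y.2 x.2 (W y + R x).2 (by simpa [hW] using hR x)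
  have hnonpos : RCLike.re ⟪W u, R x⟫_ℂ ≤ 0 := by
    refine re_inner_nonpos_of_forall_norm_sq_le (c := ‖x‖ ^ 2) fun t _ => ?_
    have hiso : ‖W ((t : ℂ) • u)‖ = ‖(t : ℂ) • u‖ := by
      rw [hu, ← map_smul]
      exact norm_apply_adjoint_apply_of_isIdempotentElem hPI _
    have h := hrow ((t : ℂ) • u)
    rw [← hiso, map_smul] at h
    exact h
  rw [← adjoint_inner_right, ← hu, inner_self_eq_norm_sq] at hnonpos
  simpa using hnonpos

/-- If a contraction `T` leaves `M` invariant with block form `[[W, R], [0, Q]]` where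
`W` is a partial isometry on `M`, then `W* R = 0`. -/
theorem stmt2 {H : Type*} [NormedAddCommGroup H] [InnerProductSpace ℂ H] [CompleteSpace H]
    (T : H →L[ℂ] H) (hT : ‖T‖ ≤ 1) (M : Submodule ℂ H) [CompleteSpace M]
    (W : M →L[ℂ] M) (hW : ∀ x : M, (W x : H) = T x)
    (hPI : IsIdempotentElem (adjoint W * W))
    (R : (Mᗮ : Submodule ℂ H) →L[ℂ] M) (hR : ∀ x : (Mᗮ : Submodule ℂ H), T x - R x ∈ Mᗮ) :
    (adjoint W).comp R = 0 :=
  stmt2_general T hT M W hW hPI R hR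
end

section
/- For every contraction T on a Hilbert space H there exists a maximum closed subspace M invariant for T on which T is a partial isometry, and it satisfies N(T) ⊆ M ⊆ N(T) ⊕ N(I - T*T). -/
/-!
For a contraction `T`, `‖T x‖ = ‖x‖` holds exactly when `T*T x = x`, and `N(I - T*T) ⊥ N(T)`.
Hence, if `T` is a partial isometry on a closed subspace `W`, splitting `W = (N(T) ⊓ W) ⊕ W'`
shows `W ⊆ V := N(T) ⊕ N(I - T*T)`; conversely `T` is a partial isometry on every `W` with
`N(T) ⊆ W ⊆ V`. The maximum subspace is therefore the largest `T`-invariant subspace of `V`,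
namely `⋂ₖ T⁻ᵏ V`, which contains the invariant subspace `N(T)`.
-/

open ContinuousLinearMap

open scoped InnerProductSpace

section Orthogonal

variable {𝕜 E : Type*} [RCLike 𝕜] [NormedAddCommGroup E] [InnerProductSpace 𝕜 E]

namespace Submodule

variable {K L : Submodule 𝕜 E} [K.HasOrthogonalProjection]

theorem mem_sup_iff_sub_starProjection_mem (hL : L ≤ Kᗮ) {x : E} :
    x ∈ K ⊔ L ↔ x - K.starProjection x ∈ L := by
  refine ⟨fun hx ↦ ?_, fun hx ↦ mem_sup.mpr ⟨_, K.starProjection_apply_mem x, _, hx, by abel⟩⟩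
  obtain ⟨k, hk, l, hl, rfl⟩ := mem_sup.mp hx
  have hPl : K.starProjection l = 0 := (starProjection_apply_eq_zero_iff K).mpr (hL hl)
  rwa [map_add, starProjection_eq_self_iff.mpr hk, hPl, add_zero, add_sub_cancel_left]

theorem isClosed_sup_of_le_orthogonal (hL : L ≤ Kᗮ) (hLc : IsClosed (L : Set E)) :
    IsClosed ((K ⊔ L : Submodule 𝕜 E) : Set E) := by
  have hset : ((K ⊔ L : Submodule 𝕜 E) : Set E) = (fun x ↦ x - K.starProjection x) ⁻¹' L := by
    ext x
    exact mem_sup_iff_sub_starProjection_mem hL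
  rw [hset]
  exact hLc.preimage (by fun_prop)

end Submodule

end Orthogonal

namespace ContinuousLinearMap

section MaxInvt

variable {R M : Type*} [Semiring R] [TopologicalSpace M] [AddCommMonoid M] [Module R M]

/-- The largest `S`-invariant submodule contained in `V`. -/
def maxInvtSubmodule (S : M →L[R] M) (V : Submodule R M) : Submodule R M :=
  ⨅ k : ℕ, V.comap ((S ^ k : M →L[R] M) : M →ₗ[R] M)

variable {S : M →L[R] M} {V : Submodule R M}

theorem mem_maxInvtSubmodule {x : M} : x ∈ S.maxInvtSubmodule V ↔ ∀ k : ℕ, (S ^ k) x ∈ V := by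
  simp only [maxInvtSubmodule, Submodule.mem_iInf, Submodule.mem_comap, coe_coe]

theorem maxInvtSubmodule_le : S.maxInvtSubmodule V ≤ V := fun x hx ↦ by
  simpa using mem_maxInvtSubmodule.mp hx 0

theorem apply_mem_maxInvtSubmodule {x : M} (hx : x ∈ S.maxInvtSubmodule V) :
    S x ∈ S.maxInvtSubmodule V :=
  mem_maxInvtSubmodule.mpr fun k ↦ by simpa [pow_succ] using mem_maxInvtSubmodule.mp hx (k + 1)

theorem le_maxInvtSubmodule {W : Submodule R M} (hWV : W ≤ V) (hW : ∀ x ∈ W, S x ∈ W) :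
    W ≤ S.maxInvtSubmodule V := by
  intro x hx
  refine mem_maxInvtSubmodule.mpr fun k ↦ hWV ?_
  induction k with
  | zero => simpa using hx
  | succ k ih => simpa [pow_succ'] using hW _ ih

theorem isClosed_maxInvtSubmodule (hV : IsClosed (V : Set M)) :
    IsClosed (S.maxInvtSubmodule V : Set M) := by
  simpa only [maxInvtSubmodule, Submodule.coe_iInf, Submodule.comap_coe, coe_coe] using
    isClosed_iInter fun k ↦ hV.preimage (S ^ k).continuous

end MaxInvt

section Hilbert

variable {𝕜 E : Type*} [RCLike 𝕜] [NormedAddCommGroup E] [InnerProductSpace 𝕜 E] [CompleteSpace E]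
  {T : E →L[𝕜] E} {x : E}

theorem mem_ker_one_sub_adjoint_mul_self_iff :
    x ∈ LinearMap.ker ((1 - adjoint T * T : E →L[𝕜] E) : E →ₗ[𝕜] E) ↔ adjoint T (T x) = x := by
  rw [LinearMap.mem_ker, coe_coe, sub_apply, one_apply_eq_self, mul_apply_eq_comp, sub_eq_zero,
    eq_comm]

theorem norm_apply_eq_of_mem_ker_one_sub_adjoint_mul_self
    (hx : x ∈ LinearMap.ker ((1 - adjoint T * T : E →L[𝕜] E) : E →ₗ[𝕜] E)) : ‖T x‖ = ‖x‖ := by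
  rw [← sq_eq_sq₀ (norm_nonneg _) (norm_nonneg _)]
  calc ‖T x‖ ^ 2 = RCLike.re ⟪adjoint T (T x), x⟫_𝕜 := by
        rw [adjoint_inner_left, inner_self_eq_norm_sq]
    _ = ‖x‖ ^ 2 := by rw [mem_ker_one_sub_adjoint_mul_self_iff.mp hx, inner_self_eq_norm_sq]

theorem mem_ker_one_sub_adjoint_mul_self_of_norm_eq (hT : ‖T‖ ≤ 1) (hx : ‖T x‖ = ‖x‖) :
    x ∈ LinearMap.ker ((1 - adjoint T * T : E →L[𝕜] E) : E →ₗ[𝕜] E) := by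
  rw [mem_ker_one_sub_adjoint_mul_self_iff, ← sub_eq_zero, ← norm_eq_zero]
  have hexp : ‖adjoint T (T x) - x‖ ^ 2 = ‖adjoint T (T x)‖ ^ 2 - ‖x‖ ^ 2 := by
    rw [norm_sub_sq (𝕜 := 𝕜), adjoint_inner_left, inner_self_eq_norm_sq, hx]
    ring
  have hcontr : ‖adjoint T (T x)‖ ≤ ‖x‖ := by
    calc ‖adjoint T (T x)‖ ≤ ‖adjoint T‖ * ‖T x‖ := le_opNorm _ _
      _ ≤ 1 * ‖x‖ := by rw [adjoint.norm_map, hx]; gcongr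
      _ = ‖x‖ := one_mul _
  nlinarith [norm_nonneg (adjoint T (T x) - x), norm_nonneg (adjoint T (T x))]

theorem ker_one_sub_adjoint_mul_self_le_orthogonal_ker (T : E →L[𝕜] E) :
    LinearMap.ker ((1 - adjoint T * T : E →L[𝕜] E) : E →ₗ[𝕜] E) ≤
      (LinearMap.ker (T : E →ₗ[𝕜] E))ᗮ := by
  intro x hx
  rw [← mem_ker_one_sub_adjoint_mul_self_iff.mp hx, orthogonal_ker]
  exact Submodule.le_topologicalClosure _ ⟨T x, rfl⟩

def IsPartialIsometryOn (T : E →L[𝕜] E) (W : Submodule 𝕜 E) : Prop :=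
  ∀ x ∈ W ⊓ (LinearMap.ker (T : E →ₗ[𝕜] E) ⊓ W)ᗮ, ‖T x‖ = ‖x‖

theorem IsPartialIsometryOn.le_ker_sup_ker_one_sub_adjoint_mul_self {W : Submodule 𝕜 E}
    (hT : ‖T‖ ≤ 1) (hW : IsClosed (W : Set E)) (h : T.IsPartialIsometryOn W) :
    W ≤ LinearMap.ker (T : E →ₗ[𝕜] E) ⊔
      LinearMap.ker ((1 - adjoint T * T : E →L[𝕜] E) : E →ₗ[𝕜] E) := by
  intro y hy
  set N := LinearMap.ker (T : E →ₗ[𝕜] E) ⊓ W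
  have : CompleteSpace N := ((isClosed_ker T).inter hW).completeSpace_coe
  have hn : N.starProjection y ∈ N := N.starProjection_apply_mem y
  have hw : y - N.starProjection y ∈ W ⊓ Nᗮ :=
    ⟨W.sub_mem hy hn.2, N.sub_starProjection_mem_orthogonal y⟩
  refine Submodule.mem_sup.mpr ⟨_, hn.1, _, ?_, add_sub_cancel _ y⟩
  exact mem_ker_one_sub_adjoint_mul_self_of_norm_eq hT (h _ hw)

theorem isPartialIsometryOn_of_ker_le_of_le_sup {W : Submodule 𝕜 E}
    (hker : LinearMap.ker (T : E →ₗ[𝕜] E) ≤ W)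
    (hW : W ≤ LinearMap.ker (T : E →ₗ[𝕜] E) ⊔
      LinearMap.ker ((1 - adjoint T * T : E →L[𝕜] E) : E →ₗ[𝕜] E)) :
    T.IsPartialIsometryOn W := by
  rintro x ⟨hxW, hx⟩
  rw [inf_eq_left.mpr hker] at hx
  have hsup := (Submodule.mem_sup_iff_sub_starProjection_mem
    (ker_one_sub_adjoint_mul_self_le_orthogonal_ker T)).mp (hW hxW)
  rw [(Submodule.starProjection_apply_eq_zero_iff _).mpr hx, sub_zero] at hsup
  exact norm_apply_eq_of_mem_ker_one_sub_adjoint_mul_self hsup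

end Hilbert

end ContinuousLinearMap

/-- For every contraction `T` there is a maximum closed invariant subspace `M` on which `T`
is a partial isometry, and `N(T) ⊆ M ⊆ N(T) ⊕ N(I - T*T)`. -/
theorem stmt4 {H : Type*} [NormedAddCommGroup H] [InnerProductSpace ℂ H] [CompleteSpace H]
    (T : H →L[ℂ] H) (hT : ‖T‖ ≤ 1) :
    ∃ M : Submodule ℂ H, IsClosed (M : Set H) ∧ (∀ x ∈ M, T x ∈ M) ∧
      (∀ x ∈ M ⊓ (LinearMap.ker (T : H →ₗ[ℂ] H) ⊓ M)ᗮ, ‖T x‖ = ‖x‖) ∧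
      (∀ M' : Submodule ℂ H, IsClosed (M' : Set H) → (∀ x ∈ M', T x ∈ M') →
        (∀ x ∈ M' ⊓ (LinearMap.ker (T : H →ₗ[ℂ] H) ⊓ M')ᗮ, ‖T x‖ = ‖x‖) → M' ≤ M) ∧
      LinearMap.ker (T : H →ₗ[ℂ] H) ≤ M ∧ M ≤ LinearMap.ker (T : H →ₗ[ℂ] H) ⊔ LinearMap.ker ((1 - adjoint T * T : H →L[ℂ] H) : H →ₗ[ℂ] H) := by
  set V := LinearMap.ker (T : H →ₗ[ℂ] H) ⊔
    LinearMap.ker ((1 - adjoint T * T : H →L[ℂ] H) : H →ₗ[ℂ] H)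
  have hV : IsClosed (V : Set H) := Submodule.isClosed_sup_of_le_orthogonal
    (ker_one_sub_adjoint_mul_self_le_orthogonal_ker T) (isClosed_ker _)
  have hker : LinearMap.ker (T : H →ₗ[ℂ] H) ≤ T.maxInvtSubmodule V :=
    le_maxInvtSubmodule le_sup_left fun x hx ↦ by
      rw [LinearMap.mem_ker, coe_coe] at hx ⊢
      rw [hx, map_zero]
  exact ⟨T.maxInvtSubmodule V, isClosed_maxInvtSubmodule hV, fun _ ↦ apply_mem_maxInvtSubmodule,
    isPartialIsometryOn_of_ker_le_of_le_sup hker maxInvtSubmodule_le,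
    fun M' hM' hinv hpi ↦ le_maxInvtSubmodule
      (IsPartialIsometryOn.le_ker_sup_ker_one_sub_adjoint_mul_self hT hM' hpi) hinv,
    hker, maxInvtSubmodule_le⟩
end

section
/- For any contraction T on a Hilbert space, N(T*T - (T*T)^2) = N(T) ⊕ N(I - T*T), and this sum is orthogonal. -/
open ContinuousLinearMap

namespace LinearMap

variable {R M : Type*} [Ring R] [AddCommGroup M] [Module R M]

theorem ker_sub_sq_eq_ker_sup_ker_one_sub (f : Module.End R M) :
    ker (f - f ^ 2) = ker f ⊔ ker (1 - f) := by
  refine le_antisymm (fun x hx => ?_) (sup_le ?_ ?_)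
  · have hx : f x - f (f x) = 0 := by simpa [pow_two] using hx
    have h1 : x - f x ∈ ker f := by simpa [sub_eq_zero] using hx
    have h2 : f x ∈ ker (1 - f) := by simpa [sub_eq_zero] using hx
    -- `x = (x - f x) + f x`
    simpa using Submodule.add_mem_sup h1 h2
  · rw [show f - f ^ 2 = (1 - f) * f by noncomm_ring]
    exact ker_le_ker_comp _ _
  · rw [show f - f ^ 2 = f * (1 - f) by noncomm_ring]
    exact ker_le_ker_comp _ _

end LinearMap

namespace ContinuousLinearMap

variable {𝕜 E F : Type*} [RCLike 𝕜] [NormedAddCommGroup E] [InnerProductSpace 𝕜 E]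
  [CompleteSpace E] [NormedAddCommGroup F] [InnerProductSpace 𝕜 F] [CompleteSpace F]

theorem ker_isOrtho_ker_one_sub_adjoint_comp_self (T : E →L[𝕜] F) :
    LinearMap.ker (T : E →ₗ[𝕜] F) ⟂
      LinearMap.ker ((1 - adjoint T ∘L T : E →L[𝕜] E) : E →ₗ[𝕜] E) := by
  refine Submodule.isOrtho_iff_inner_eq.mpr fun x hx y hy => ?_
  have hx : T x = 0 := hx
  have hy : y = adjoint T (T y) := by simpa [sub_eq_zero] using hy
  rw [hy, adjoint_inner_right, hx, inner_zero_left]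

end ContinuousLinearMap

theorem stmt5_general {H : Type*} [NormedAddCommGroup H] [InnerProductSpace ℂ H] [CompleteSpace H]
    (T : H →L[ℂ] H) :
    LinearMap.ker ((adjoint T * T - (adjoint T * T) ^ 2 : H →L[ℂ] H) : H →ₗ[ℂ] H) =
      LinearMap.ker (T : H →ₗ[ℂ] H) ⊔ LinearMap.ker ((1 - adjoint T * T : H →L[ℂ] H) : H →ₗ[ℂ] H) ∧
    ∀ x ∈ LinearMap.ker (T : H →ₗ[ℂ] H), ∀ y ∈ LinearMap.ker ((1 - adjoint T * T : H →L[ℂ] H) : H →ₗ[ℂ] H),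
      (inner ℂ x y : ℂ) = 0 := by
  refine ⟨?_, Submodule.isOrtho_iff_inner_eq.mp (ker_isOrtho_ker_one_sub_adjoint_comp_self T)⟩
  have hker : LinearMap.ker ((adjoint T * T : H →L[ℂ] H) : H →ₗ[ℂ] H) =
      LinearMap.ker (T : H →ₗ[ℂ] H) :=
    ker_adjoint_comp_self T
  rw [← hker, toLinearMap_sub, toLinearMap_sub, toLinearMap_pow, toLinearMap_one]
  exact LinearMap.ker_sub_sq_eq_ker_sup_ker_one_sub _

/-- For a contraction `T`, `N(T*T - (T*T)²) = N(T) ⊕ N(I - T*T)`, the sum being orthogonal. -/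
theorem stmt5 {H : Type*} [NormedAddCommGroup H] [InnerProductSpace ℂ H] [CompleteSpace H]
    (T : H →L[ℂ] H) (hT : ‖T‖ ≤ 1) :
    LinearMap.ker ((adjoint T * T - (adjoint T * T) ^ 2 : H →L[ℂ] H) : H →ₗ[ℂ] H) =
      LinearMap.ker (T : H →ₗ[ℂ] H) ⊔ LinearMap.ker ((1 - adjoint T * T : H →L[ℂ] H) : H →ₗ[ℂ] H) ∧
    ∀ x ∈ LinearMap.ker (T : H →ₗ[ℂ] H), ∀ y ∈ LinearMap.ker ((1 - adjoint T * T : H →L[ℂ] H) : H →ₗ[ℂ] H),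
      (inner ℂ x y : ℂ) = 0 :=
  stmt5_general T
end

section
/- Let T be a contraction satisfying |T| ≤ |Re T|. Then N(Re T) = N(T) ∩ N(T*). -/
open ContinuousLinearMap

/-!
If `Re T x = 0` then `|Re T| x = 0`, since `|Re T|` and `Re T` have the same kernel. Testing
`0 ≤ |T| ≤ |Re T|` against `x` gives `⟪|T| x, x⟫ = 0`, hence `|T| x = 0` and so `T x = 0`;
finally `T* x = 2 Re T x - T x = 0`.
-/

open scoped InnerProductSpace

namespace ContinuousLinearMap

variable {H : Type*} [NormedAddCommGroup H] [InnerProductSpace ℂ H] [CompleteSpace H]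

lemma adjoint_mul_self_apply_eq_zero_iff (T : H →L[ℂ] H) (x : H) :
    (adjoint T * T) x = 0 ↔ T x = 0 :=
  SetLike.ext_iff.mp (ker_adjoint_comp_self T) x

lemma adjoint_sqrt_mul_sqrt {P : H →L[ℂ] H} (hP : 0 ≤ P) :
    adjoint (CFC.sqrt P) * CFC.sqrt P = P := by
  rw [← star_eq_adjoint, (CFC.sqrt_nonneg P).isSelfAdjoint.star_eq, CFC.sqrt_mul_sqrt_self P hP]

lemma sqrt_apply_eq_zero_iff {P : H →L[ℂ] H} (hP : 0 ≤ P) (x : H) :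
    CFC.sqrt P x = 0 ↔ P x = 0 := by
  rw [← adjoint_mul_self_apply_eq_zero_iff, adjoint_sqrt_mul_sqrt hP]

lemma apply_eq_zero_of_re_inner_eq_zero {P : H →L[ℂ] H} (hP : 0 ≤ P) {x : H}
    (hx : RCLike.re ⟪P x, x⟫_ℂ = 0) : P x = 0 := by
  rw [← adjoint_sqrt_mul_sqrt hP, mul_apply_eq_comp, adjoint_inner_left,
    inner_self_eq_norm_sq] at hx
  rw [← sqrt_apply_eq_zero_iff hP]
  simpa using hx

lemma apply_eq_zero_of_le {A B : H →L[ℂ] H} (hA : 0 ≤ A) (hAB : A ≤ B) {x : H}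
    (hx : B x = 0) : A x = 0 := by
  have hBA := ((le_def A B).mp hAB).re_inner_nonneg_left x
  have hA' := ((nonneg_iff_isPositive A).mp hA).re_inner_nonneg_left x
  rw [sub_apply, hx, zero_sub, inner_neg_left, map_neg, neg_nonneg] at hBA
  exact apply_eq_zero_of_re_inner_eq_zero hA (le_antisymm hBA hA')

end ContinuousLinearMap

section

variable {H : Type*} [NormedAddCommGroup H] [InnerProductSpace ℂ H] [CompleteSpace H]

lemma isSelfAdjoint_reOp (T : H →L[ℂ] H) : IsSelfAdjoint (reOp T) := by
  simp only [IsSelfAdjoint, reOp, star_smul, star_add, star_eq_adjoint, adjoint_adjoint,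
    star_inv₀, star_ofNat, add_comm]

lemma absOp_nonneg (T : H →L[ℂ] H) : 0 ≤ absOp T := CFC.sqrt_nonneg _

lemma absOp_apply_eq_zero_iff (T : H →L[ℂ] H) (x : H) : absOp T x = 0 ↔ T x = 0 := by
  rw [absOp, sqrt_apply_eq_zero_iff (by simpa [star_eq_adjoint] using star_mul_self_nonneg T),
    adjoint_mul_self_apply_eq_zero_iff]

lemma absRe_apply_eq_zero_iff (T : H →L[ℂ] H) (x : H) : absRe T x = 0 ↔ reOp T x = 0 := by
  have hsq : reOp T ^ 2 = adjoint (reOp T) * reOp T := by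
    rw [sq, ← star_eq_adjoint, (isSelfAdjoint_reOp T).star_eq]
  rw [absRe, sqrt_apply_eq_zero_iff (by rw [hsq]; exact star_mul_self_nonneg _), hsq,
    adjoint_mul_self_apply_eq_zero_iff]

end

theorem stmt7_general {H : Type*} [NormedAddCommGroup H] [InnerProductSpace ℂ H] [CompleteSpace H]
    (T : H →L[ℂ] H) (h : absOp T ≤ absRe T) :
    LinearMap.ker (reOp T : H →ₗ[ℂ] H) = LinearMap.ker (T : H →ₗ[ℂ] H) ⊓
      LinearMap.ker ((adjoint T : H →L[ℂ] H) : H →ₗ[ℂ] H) := by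
  ext x
  simp only [LinearMap.mem_ker, Submodule.mem_inf, coe_coe]
  constructor
  · intro hx
    have hTx : T x = 0 := (absOp_apply_eq_zero_iff T x).mp <|
      apply_eq_zero_of_le (absOp_nonneg T) h ((absRe_apply_eq_zero_iff T x).mpr hx)
    refine ⟨hTx, ?_⟩
    simpa [reOp, hTx] using hx
  · rintro ⟨hTx, hT'x⟩
    simp [reOp, hTx, hT'x]

/-- For a contraction `T` with `|T| ≤ |Re T|`, one has `N(Re T) = N(T) ∩ N(T*)`. -/
theorem stmt7 {H : Type*} [NormedAddCommGroup H] [InnerProductSpace ℂ H] [CompleteSpace H]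
    (T : H →L[ℂ] H) (hT : ‖T‖ ≤ 1) (h : absOp T ≤ absRe T) :
    LinearMap.ker (reOp T : H →ₗ[ℂ] H) = LinearMap.ker (T : H →ₗ[ℂ] H) ⊓
      LinearMap.ker ((adjoint T : H →L[ℂ] H) : H →ₗ[ℂ] H) :=
  stmt7_general T h
end

section
/- A partial isometry T satisfying |T| ≤ |Re T| is self-adjoint. -/
open ContinuousLinearMap

/-!
Put `P = T⋆T`, a projection, so that `|T| = P`, `T P = T` and `‖T‖ ≤ 1`. For `x` in the range of
`P`, `‖x‖² = ⟪P x, x⟫ ≤ ⟪|Re T| x, x⟫ ≤ ‖Re T x‖ ‖x‖`, so `‖(T x + T⋆ x) / 2‖ ≥ ‖x‖` while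
`‖T x‖, ‖T⋆ x‖ ≤ ‖x‖`; the parallelogram law forces `T x = T⋆ x`. Thus `T⋆ P = T P = T`, and
then `T⋆ = P T = P T⋆ P = T⋆ P = T`.
-/

open scoped ComplexInnerProductSpace

section CStarRing

variable {A : Type*} [NonUnitalNormedRing A] [StarRing A] [CStarRing A]

lemma norm_le_one_of_isIdempotentElem_star_mul_self {a : A}
    (ha : IsIdempotentElem (star a * a)) : ‖a‖ ≤ 1 := by
  have h : ‖a‖ * ‖a‖ ≤ 1 :=
    CStarRing.norm_star_mul_self (x := a) ▸ IsStarProjection.norm_le _ ⟨ha, .star_mul_self a⟩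
  nlinarith [norm_nonneg a]

/-- `a - a (a⋆a)` has `C⋆`-square zero once `a⋆a` is idempotent. -/
lemma mul_star_mul_self_of_isIdempotentElem {a : A} (ha : IsIdempotentElem (star a * a)) :
    a * (star a * a) = a := by
  have hp : star (star a * a) = star a * a := IsSelfAdjoint.star_mul_self a
  have h : star (a - a * (star a * a)) * (a - a * (star a * a)) = 0 := by
    have e : star a * a * (star a * a) = star a * a := ha.eq
    simp only [star_sub, star_mul, hp, sub_mul, mul_sub]
    simp only [← mul_assoc] at e ⊢
    rw [e, e]
    simp only [sub_self]
  exact (sub_eq_zero.mp ((CStarRing.star_mul_self_eq_zero_iff _).mp h)).symm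

end CStarRing

lemma star_eq_self_of_mul_eq_of_star_mul_eq {R : Type*} [Monoid R] [StarMul R] {a p : R}
    (hp : IsSelfAdjoint p) (hap : a * p = a) (hsap : star a * p = a) : star a = a :=
  have hpa : p * star a = star a := by simpa [hp.star_eq] using congrArg star hap
  calc star a = p * a := by simpa [hp.star_eq] using (congrArg star hsap).symm
    _ = p * star a * p := by rw [mul_assoc, hsap]
    _ = a := by rw [hpa, hsap]

lemma eq_of_norm_le_of_le_norm_add {𝕜 E : Type*} [RCLike 𝕜] [NormedAddCommGroup E]
    [InnerProductSpace 𝕜 E] {u v : E} {r : ℝ} (hu : ‖u‖ ≤ r) (hv : ‖v‖ ≤ r)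
    (huv : 2 * r ≤ ‖u + v‖) : u = v := by
  have hpar := parallelogram_law_with_norm 𝕜 u v
  have hr : 0 ≤ r := (norm_nonneg u).trans hu
  have : ‖u - v‖ = 0 := by nlinarith [norm_nonneg u, norm_nonneg v, norm_nonneg (u - v)]
  exact sub_eq_zero.mp (norm_eq_zero.mp this)

namespace ContinuousLinearMap

variable {H : Type*} [NormedAddCommGroup H] [InnerProductSpace ℂ H]

lemma norm_le_norm_apply_of_le {P B : H →L[ℂ] H} (hPB : P ≤ B) {x : H} (hx : P x = x) :
    ‖x‖ ≤ ‖B x‖ := by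
  have hpos := ((le_def P B).mp hPB).re_inner_nonneg_left x
  rw [sub_apply, inner_sub_left, map_sub, hx, inner_self_eq_norm_sq] at hpos
  have hCS : RCLike.re ⟪B x, x⟫ ≤ ‖B x‖ * ‖x‖ :=
    (RCLike.re_le_norm _).trans (norm_inner_le_norm _ _)
  rcases (norm_nonneg x).eq_or_lt with h0 | hpos'
  · rw [← h0]; exact norm_nonneg _
  · nlinarith

variable [CompleteSpace H]

lemma norm_apply_eq_of_adjoint_mul_self_eq {S T : H →L[ℂ] H}
    (h : adjoint S * S = adjoint T * T) (x : H) : ‖S x‖ = ‖T x‖ := by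
  have hsq : ‖S x‖ ^ 2 = ‖T x‖ ^ 2 := by
    rw [apply_norm_sq_eq_inner_adjoint_left, apply_norm_sq_eq_inner_adjoint_left]
    exact congrArg (fun B : H →L[ℂ] H => RCLike.re ⟪B x, x⟫) h
  exact (sq_eq_sq₀ (norm_nonneg _) (norm_nonneg _)).mp hsq

lemma isSelfAdjoint_reOp (T : H →L[ℂ] H) : IsSelfAdjoint (reOp T) := by
  simp [IsSelfAdjoint, reOp, star_eq_adjoint, add_comm]

lemma norm_absRe_apply (T : H →L[ℂ] H) (x : H) : ‖absRe T x‖ = ‖reOp T x‖ := by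
  refine norm_apply_eq_of_adjoint_mul_self_eq ?_ x
  have hR : 0 ≤ reOp T ^ 2 := by
    simpa [sq, (isSelfAdjoint_reOp T).star_eq] using star_mul_self_nonneg (reOp T)
  rw [← star_eq_adjoint, ← star_eq_adjoint, (CFC.sqrt_nonneg _).isSelfAdjoint.star_eq,
    (isSelfAdjoint_reOp T).star_eq, ← sq, ← sq]
  exact CFC.sq_sqrt _ hR

lemma apply_eq_adjoint_apply_of_le_norm_reOp_apply {T : H →L[ℂ] H} (hT : ‖T‖ ≤ 1) {x : H}
    (hx : ‖x‖ ≤ ‖reOp T x‖) : T x = adjoint T x := by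
  refine eq_of_norm_le_of_le_norm_add (𝕜 := ℂ) (r := ‖x‖) ?_ ?_ ?_
  · exact (le_opNorm T x).trans (mul_le_of_le_one_left (norm_nonneg x) hT)
  · refine (le_opNorm _ x).trans (mul_le_of_le_one_left (norm_nonneg x) ?_)
    rwa [LinearIsometryEquiv.norm_map]
  · have : ‖reOp T x‖ = 2⁻¹ * ‖T x + adjoint T x‖ := by
      rw [reOp, smul_apply, add_apply, norm_smul, norm_inv, Complex.norm_two]
    linarith

end ContinuousLinearMap

/-- A partial isometry satisfying `|T| ≤ |Re T|` is self-adjoint. -/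
theorem stmt8 {H : Type*} [NormedAddCommGroup H] [InnerProductSpace ℂ H] [CompleteSpace H]
    (T : H →L[ℂ] H) (hPI : IsIdempotentElem (adjoint T * T)) (h : absOp T ≤ absRe T) :
    adjoint T = T := by
  set P := adjoint T * T
  have hP : absOp T = P := CFC.sqrt_unique hPI.eq (star_mul_self_nonneg T)
  have hTP : T * P = T := mul_star_mul_self_of_isIdempotentElem hPI
  have hadjP : adjoint T * P = T := by
    refine .trans ?_ hTP
    ext x
    have hx : P (P x) = P x := congrArg (· x) hPI.eq
    refine (apply_eq_adjoint_apply_of_le_norm_reOp_apply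
      (norm_le_one_of_isIdempotentElem_star_mul_self hPI) ?_).symm
    rw [← norm_absRe_apply]
    exact norm_le_norm_apply_of_le (hP ▸ h) hx
  exact star_eq_self_of_mul_eq_of_star_mul_eq (.star_mul_self T) hTP hadjP
end
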